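/- Under the same Volterra equation hypotheses, there exists ε₀ > 0 such that for all ε ∈ (0, ε₀) with ε·|k|₁ < 1, there is a constant F(ε) > 0 so that x*(n) ≤ (|x(0)| + |k|₁ F(ε) + H*(n)) / (1 − ε|k|₁) for all n ≥ 1, where |k|₁ = ∑_{j=0}^∞ |k(j)|, H*(n) = max_{1≤j≤n} |H(j)|, x*(n) = max_{0≤j≤n} |x(j)|. -/

import Mathlib

open Filter Finset Topology

/-- Running maximum of `g` over `{1,…,n}` (value `0` when `n = 0`). -/
noncomputable def runMax1 (g : ℕ → ℝ) (n : ℕ) : ℝ :=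
  if h : 1 ≤ n then (Finset.Icc 1 n).sup' (Finset.nonempty_Icc.mpr h) g else 0

/-- Running maximum of `g` over `{0,…,n}`. -/
noncomputable def runMax0 (g : ℕ → ℝ) (n : ℕ) : ℝ :=
  (Finset.Icc 0 n).sup' (Finset.nonempty_Icc.mpr (Nat.zero_le n)) g

/-! Away from a compact set `|f y| ≤ ε |y|`, and on that compact set `f` is bounded, so
`|f y| ≤ ε |y| + F` everywhere. Feeding this into the equation bounds every `|x m|`, `m ≤ n`, by
`|x 0| + |k|₁ F + H*(n) + ε |k|₁ x*(n)`; taking the maximum over `m` and solving for `x*(n)` gives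
the claim, for every `ε` with `ε |k|₁ < 1`. -/

theorem Asymptotics.IsLittleO.exists_norm_le_mul_norm_add {X E G : Type*} [TopologicalSpace X]
    [SeminormedAddGroup E] [SeminormedAddGroup G] {f : X → E} {g : X → G} (hfg : f =o[cocompact X] g)
    (hf : Continuous f) {ε : ℝ} (hε : 0 < ε) :
    ∃ C, 0 < C ∧ ∀ y, ‖f y‖ ≤ ε * ‖g y‖ + C := by
  obtain ⟨K, hK, hfar⟩ := mem_cocompact.mp (hfg.bound hε)
  obtain ⟨C, hC⟩ := hK.exists_bound_of_continuousOn hf.continuousOn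
  refine ⟨max C 1, lt_max_of_lt_right one_pos, fun y => ?_⟩
  have hg : 0 ≤ ε * ‖g y‖ := by positivity
  by_cases hy : y ∈ K
  · linarith [hC y hy, le_max_left C 1]
  · have hfy : ‖f y‖ ≤ ε * ‖g y‖ := hfar hy
    linarith [le_max_right C 1]

theorem isLittleO_id_of_tendsto_div_cocompact {f : ℝ → ℝ}
    (hf : Tendsto (fun y => f y / y) (cocompact ℝ) (𝓝 0)) : f =o[cocompact ℝ] id := by
  refine (Asymptotics.isLittleO_iff_tendsto' ?_).mpr hf
  filter_upwards [isCompact_singleton.compl_mem_cocompact] with y hy hy0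
  exact absurd hy0 hy

section RunningMax

variable {n j : ℕ}

theorem le_runMax0 (g : ℕ → ℝ) (hj : j ≤ n) : g j ≤ runMax0 g n :=
  le_sup' g (mem_Icc.mpr ⟨j.zero_le, hj⟩)

theorem runMax0_le_iff {g : ℕ → ℝ} {c : ℝ} : runMax0 g n ≤ c ↔ ∀ j ≤ n, g j ≤ c := by
  simp [runMax0, sup'_le_iff]

theorem runMax0_mono {g : ℕ → ℝ} {m : ℕ} (hmn : m ≤ n) : runMax0 g m ≤ runMax0 g n :=
  runMax0_le_iff.mpr fun _ hj => le_runMax0 g (hj.trans hmn)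

theorem le_runMax1 (g : ℕ → ℝ) (hj1 : 1 ≤ j) (hjn : j ≤ n) : g j ≤ runMax1 g n := by
  rw [runMax1, dif_pos (hj1.trans hjn)]
  exact le_sup' g (mem_Icc.mpr ⟨hj1, hjn⟩)

theorem runMax1_nonneg {g : ℕ → ℝ} (hg : ∀ j, 0 ≤ g j) : 0 ≤ runMax1 g n := by
  by_cases hn : 1 ≤ n
  · exact (hg 1).trans (le_runMax1 g le_rfl hn)
  · simp [runMax1, hn]

end RunningMax

theorem sum_range_abs_sub_le_tsum {k : ℕ → ℝ} (hk : Summable fun j => |k j|) (n : ℕ) :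
    ∑ j ∈ range (n + 1), |k (n - j)| ≤ ∑' j, |k j| := by
  have hreflect := sum_range_reflect (fun j => |k j|) (n + 1)
  simp only [Nat.add_sub_cancel] at hreflect
  rw [hreflect]
  exact hk.sum_le_tsum _ fun j _ => abs_nonneg _

section Volterra

variable {f : ℝ → ℝ} {k H x : ℕ → ℝ} {ε F : ℝ}

theorem abs_volterra_succ_le (hk : Summable fun j => |k j|)
    (hx : ∀ n : ℕ, x (n + 1) = H (n + 1) + ∑ j ∈ range (n + 1), k (n - j) * f (x j))
    (hε : 0 ≤ ε) (hfF : ∀ y, |f y| ≤ ε * |y| + F) (n : ℕ) :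
    |x (n + 1)| ≤ |H (n + 1)| + (∑' j, |k j|) * (ε * runMax0 (fun j => |x j|) n + F) := by
  set X := runMax0 (fun j => |x j|) n
  have hX : 0 ≤ ε * X + F := by
    have hF : 0 ≤ F := by simpa using (abs_nonneg (f 0)).trans (hfF 0)
    have : 0 ≤ X := (abs_nonneg (x 0)).trans (le_runMax0 (fun j => |x j|) n.zero_le)
    positivity
  have hterm : ∀ j ∈ range (n + 1), |k (n - j) * f (x j)| ≤ |k (n - j)| * (ε * X + F) := by
    intro j hj
    rw [abs_mul]
    gcongr
    have hxj : |x j| ≤ X := le_runMax0 (fun j => |x j|) (Nat.lt_succ_iff.mp (mem_range.mp hj))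
    linarith [hfF (x j), mul_le_mul_of_nonneg_left hxj hε]
  calc |x (n + 1)|
      ≤ |H (n + 1)| + ∑ j ∈ range (n + 1), |k (n - j) * f (x j)| := by
        rw [hx n]
        exact (abs_add_le _ _).trans (add_le_add_right (abs_sum_le_sum_abs _ _) _)
    _ ≤ |H (n + 1)| + (∑ j ∈ range (n + 1), |k (n - j)|) * (ε * X + F) := by
        rw [sum_mul]
        gcongr with j hj
        exact hterm j hj
    _ ≤ |H (n + 1)| + (∑' j, |k j|) * (ε * X + F) := by
        gcongr
        exact sum_range_abs_sub_le_tsum hk n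

theorem runMax0_abs_volterra_le (hk : Summable fun j => |k j|)
    (hx : ∀ n : ℕ, x (n + 1) = H (n + 1) + ∑ j ∈ range (n + 1), k (n - j) * f (x j))
    (hε : 0 ≤ ε) (hfF : ∀ y, |f y| ≤ ε * |y| + F) (n : ℕ) :
    runMax0 (fun j => |x j|) n ≤ |x 0| + (∑' j, |k j|) * F + runMax1 (fun j => |H j|) n
      + ε * (∑' j, |k j|) * runMax0 (fun j => |x j|) n := by
  have hK : 0 ≤ ∑' j, |k j| := tsum_nonneg fun j => abs_nonneg _
  have hF : 0 ≤ F := by simpa using (abs_nonneg (f 0)).trans (hfF 0)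
  have hX : 0 ≤ runMax0 (fun j => |x j|) n :=
    (abs_nonneg (x 0)).trans (le_runMax0 (fun j => |x j|) n.zero_le)
  have hH : 0 ≤ runMax1 (fun j => |H j|) n := runMax1_nonneg fun j => abs_nonneg _
  have hKF : 0 ≤ (∑' j, |k j|) * F := mul_nonneg hK hF
  refine runMax0_le_iff.mpr fun m hm => ?_
  cases m with
  | zero =>
    have : 0 ≤ ε * (∑' j, |k j|) * runMax0 (fun j => |x j|) n := by positivity
    linarith
  | succ p =>
    have hHp : |H (p + 1)| ≤ runMax1 (fun j => |H j|) n :=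
      le_runMax1 (fun j => |H j|) (Nat.succ_pos p) hm
    have hkX : (∑' j, |k j|) * (ε * runMax0 (fun j => |x j|) p + F)
        ≤ (∑' j, |k j|) * (ε * runMax0 (fun j => |x j|) n + F) := by
      gcongr
      exact runMax0_mono (Nat.le_of_succ_le hm)
    linarith [abs_volterra_succ_le hk hx hε hfF p, abs_nonneg (x 0)]

end Volterra

theorem stmt3_general
(f : ℝ → ℝ) (k H x : ℕ → ℝ)
    (hf : Continuous f)
    (hsub : Filter.Tendsto (fun y => f y / y) (Filter.cocompact ℝ) (nhds 0))
    (hk : Summable (fun j => |k j|))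
    (hx : ∀ n : ℕ, x (n + 1) = H (n + 1) + ∑ j ∈ Finset.range (n + 1), k (n - j) * f (x j)) :
    ∃ ε₀ : ℝ, 0 < ε₀ ∧ ∀ ε : ℝ, 0 < ε → ε < ε₀ → ε * (∑' j, |k j|) < 1 →
      ∃ F : ℝ, 0 < F ∧ ∀ n : ℕ, 1 ≤ n →
        runMax0 (fun j => |x j|) n ≤
          (|x 0| + (∑' j, |k j|) * F + runMax1 (fun j => |H j|) n) /
            (1 - ε * (∑' j, |k j|)) := by
  refine ⟨1, one_pos, fun ε hε _ hεk => ?_⟩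
  obtain ⟨F, hF, hfF⟩ :=
    (isLittleO_id_of_tendsto_div_cocompact hsub).exists_norm_le_mul_norm_add hf hε
  refine ⟨F, hF, fun n _ => ?_⟩
  rw [le_div_iff₀ (by linarith)]
  linarith [runMax0_abs_volterra_le hk hx hε.le hfF n]

theorem stmt3
(f : ℝ → ℝ) (k H x : ℕ → ℝ) (ξ : ℝ)
    (hf : Continuous f)
    (hsub : Filter.Tendsto (fun y => f y / y) (Filter.cocompact ℝ) (nhds 0))
    (hk : Summable (fun j => |k j|))
    (hx0 : x 0 = ξ)
    (hx : ∀ n : ℕ, x (n + 1) = H (n + 1) + ∑ j ∈ Finset.range (n + 1), k (n - j) * f (x j)) :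
    ∃ ε₀ : ℝ, 0 < ε₀ ∧ ∀ ε : ℝ, 0 < ε → ε < ε₀ → ε * (∑' j, |k j|) < 1 →
      ∃ F : ℝ, 0 < F ∧ ∀ n : ℕ, 1 ≤ n →
        runMax0 (fun j => |x j|) n ≤
          (|x 0| + (∑' j, |k j|) * F + runMax1 (fun j => |H j|) n) /
            (1 - ε * (∑' j, |k j|)) :=
  stmt3_general f k H x hf hsub hk hx
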